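/- arXiv:0811.0061 — 9 statements merged into one kernel-verified Lean document; each statement's English description precedes it below -/
import Mathlib

section
/- Let a : ℝ → ℝ be continuous with L := inf_{y∈ℝ} a(y) > 0, let r > 0 and let σ > 0 satisfy 1/(1+s) ≤ exp(−σs) for all s ∈ [0, rL]. Then for every sequence of step sizes h_i ∈ (0, r], every bounded sequence v_i ∈ ℝ and every x_0 ∈ ℝ, the sequence defined by x_{i+1} = (x_i + h_i v_i)/(1 + h_i a(x_i)) satisfies |x_{i+1}| ≤ |x_0| exp(−σ L τ_{i+1}) + (1/(σL)) max_{0≤j≤i} |v_j| for all i ≥ 0, where τ_{i+1} = h_0 + ... + h_i. -/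
open Real Finset

theorem stmt0 (a : ℝ → ℝ) (ha : Continuous a) (L : ℝ)
    (hLdef : L = sInf (Set.range a)) (hL : 0 < L)
    (r : ℝ) (hr : 0 < r) (σ : ℝ) (hσ : 0 < σ)
    (hσs : ∀ s ∈ Set.Icc (0:ℝ) (r * L), 1 / (1 + s) ≤ Real.exp (-σ * s))
    (h v x : ℕ → ℝ) (hh : ∀ i, h i ∈ Set.Ioc (0:ℝ) r)
    (hv : ∃ M, ∀ i, |v i| ≤ M)
    (hx : ∀ i, x (i + 1) = (x i + h i * v i) / (1 + h i * a (x i)))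
    (τ : ℕ → ℝ) (hτ : ∀ i, τ i = ∑ j ∈ Finset.range i, h j) :
    ∀ i, |x (i + 1)| ≤ |x 0| * Real.exp (-σ * L * τ (i + 1)) +
      (1 / (σ * L)) * (Finset.range (i + 1)).sup' (by simp) (fun j => |v j|) := by
  have hbdd : BddBelow (Set.range a) := by
    by_contra hb
    rw [Real.sInf_of_not_bddBelow hb] at hLdef
    exact absurd hLdef hL.ne'
  have hLb : ∀ y, L ≤ a y := fun y => hLdef ▸ csInf_le hbdd ⟨y, rfl⟩
  have hσL : 0 < σ * L := mul_pos hσ hL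
  set c : ℝ := 1 / (σ * L) with hc
  have hc0 : 0 < c := by positivity
  have hcmul : c * (σ * L) = 1 := by rw [hc, one_div, inv_mul_cancel₀ hσL.ne']
  -- one step estimate
  have key : ∀ i, |x (i+1)| ≤
      |x i| * Real.exp (-(σ*L*h i)) + h i * |v i| * Real.exp (-(σ*L*h i)) := by
    intro i
    obtain ⟨hh1, hh2⟩ := hh i
    have hd : (0:ℝ) < 1 + h i * L := by nlinarith
    have hd2 : (0:ℝ) < 1 + h i * a (x i) := by nlinarith [hLb (x i)]
    have h1 : |x (i+1)| ≤ (|x i| + h i * |v i|) / (1 + h i * L) := by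
      rw [hx i, abs_div, abs_of_pos hd2]
      apply div_le_div₀ (by positivity) _ hd (by nlinarith [hLb (x i)])
      calc |x i + h i * v i| ≤ |x i| + |h i * v i| := abs_add_le _ _
        _ = |x i| + h i * |v i| := by rw [abs_mul, abs_of_pos hh1]
    have h2 : 1 / (1 + h i * L) ≤ Real.exp (-(σ*L*h i)) := by
      have := hσs (h i * L) ⟨by positivity, by nlinarith⟩
      calc 1 / (1 + h i * L) ≤ Real.exp (-σ * (h i * L)) := this
        _ = Real.exp (-(σ*L*h i)) := by ring_nf
    calc |x (i+1)| ≤ (|x i| + h i * |v i|) / (1 + h i * L) := h1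
      _ = (|x i| + h i * |v i|) * (1 / (1 + h i * L)) := by ring
      _ ≤ (|x i| + h i * |v i|) * Real.exp (-(σ*L*h i)) := by
          apply mul_le_mul_of_nonneg_left h2 (by positivity)
      _ = |x i| * Real.exp (-(σ*L*h i)) + h i * |v i| * Real.exp (-(σ*L*h i)) := by ring
  have hτs : ∀ i, τ (i + 1) = τ i + h i := by
    intro i; rw [hτ, hτ, Finset.sum_range_succ]
  have hτ0 : τ 0 = 0 := by rw [hτ]; simp
  -- the crucial scalar inequality: (c + h) * exp(-(σ*L*h)) ≤ c for h ≥ 0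
  have crucial : ∀ i, (c + h i) * Real.exp (-(σ*L*h i)) ≤ c := by
    intro i
    obtain ⟨hh1, _⟩ := hh i
    have hu : (0:ℝ) ≤ σ*L*h i := by positivity
    have h1 : 1 + σ*L*h i ≤ Real.exp (σ*L*h i) := by
      have := Real.add_one_le_exp (σ*L*h i); linarith
    have hE : Real.exp (-(σ*L*h i)) = (Real.exp (σ*L*h i))⁻¹ := by
      rw [Real.exp_neg]
    have hEpos : 0 < Real.exp (σ*L*h i) := Real.exp_pos _
    rw [hE]
    rw [mul_inv_le_iff₀ hEpos]
    have : c + h i = c * (1 + σ*L*h i) := by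
      rw [mul_add, mul_one, show c*(σ*L*h i) = c*(σ*L)*h i from by ring, hcmul, one_mul]
    rw [this]
    calc c * (1 + σ*L*h i) ≤ c * Real.exp (σ*L*h i) :=
          mul_le_mul_of_nonneg_left h1 (le_of_lt hc0)
      _ = c * Real.exp (σ*L*h i) := rfl
  intro i
  induction i with
  | zero =>
    have hk := key 0
    have hcr := crucial 0
    have hs : (Finset.range 1).sup' (by simp) (fun j => |v j|) = |v 0| := by simp
    rw [hs]
    have hτ1 : τ 1 = h 0 := by rw [hτs 0, hτ0]; ring
    rw [hτ1]
    have hE : Real.exp (-σ * L * h 0) = Real.exp (-(σ*L*h 0)) := by ring_nf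
    rw [hE]
    have hEpos : 0 < Real.exp (-(σ*L*h 0)) := Real.exp_pos _
    have hv0 : 0 ≤ |v 0| := abs_nonneg _
    nlinarith [mul_le_mul_of_nonneg_right hcr hv0, mul_pos hc0 hEpos]
  | succ n ih =>
    have hk := key (n+1)
    have hcr := crucial (n+1)
    set E := Real.exp (-(σ*L*h (n+1))) with hEdef
    have hEpos : 0 < E := Real.exp_pos _
    set S := (Finset.range (n+1)).sup' (by simp) (fun j => |v j|) with hS
    set M := (Finset.range (n+2)).sup' (by simp) (fun j => |v j|) with hM
    have hSM : S ≤ M := by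
      apply Finset.sup'_le
      intro j hj
      exact Finset.le_sup' (f := fun j => |v j|) (Finset.mem_range.mpr (Nat.lt_succ_of_lt (Finset.mem_range.mp hj)))
    have hvM : |v (n+1)| ≤ M := Finset.le_sup' (f := fun j => |v j|) (Finset.mem_range.mpr (Nat.lt_succ_self _))
    have hM0 : 0 ≤ M := le_trans (abs_nonneg _) hvM
    have hTmul : Real.exp (-σ * L * τ (n+1)) * E = Real.exp (-σ * L * τ (n+2)) := by
      rw [hEdef, ← Real.exp_add, hτs (n+1)]; ring_nf
    have hTpos : 0 < Real.exp (-σ * L * τ (n+1)) := Real.exp_pos _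
    have hx0 : 0 ≤ |x 0| := abs_nonneg _
    calc |x (n+2)| ≤ |x (n+1)| * E + h (n+1) * |v (n+1)| * E := hk
      _ ≤ (|x 0| * Real.exp (-σ * L * τ (n+1)) + c * S) * E + h (n+1) * M * E := by
          have h1 : |x (n+1)| * E ≤ (|x 0| * Real.exp (-σ * L * τ (n+1)) + c * S) * E :=
            mul_le_mul_of_nonneg_right ih (le_of_lt hEpos)
          have h2 : h (n+1) * |v (n+1)| * E ≤ h (n+1) * M * E := by
            apply mul_le_mul_of_nonneg_right _ (le_of_lt hEpos)
            exact mul_le_mul_of_nonneg_left hvM (le_of_lt (hh (n+1)).1)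
          linarith
      _ = |x 0| * (Real.exp (-σ * L * τ (n+1)) * E) + (c * S + h (n+1) * M) * E := by ring
      _ ≤ |x 0| * Real.exp (-σ * L * τ (n+2)) + c * M := by
          rw [hTmul]
          have : (c * S + h (n+1) * M) * E ≤ c * M := by
            have h3 : c * S ≤ c * M := mul_le_mul_of_nonneg_left hSM (le_of_lt hc0)
            have h4 : (c * S + h (n+1) * M) * E ≤ (c + h (n+1)) * M * E := by
              apply mul_le_mul_of_nonneg_right _ (le_of_lt hEpos)
              nlinarith
            have h5 : (c + h (n+1)) * M * E ≤ c * M := by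
              have := mul_le_mul_of_nonneg_right hcr hM0
              nlinarith
            linarith
          linarith
end

section
/- Let L > 0, σ > 0 with 1/(1+s) ≤ exp(−σs) for all s ∈ [0, rL], and let h_0,…,h_i ∈ (0, r] with τ_j = h_0 + ⋯ + h_{j−1} (τ_0 = 0). Then ∑_{j=0}^{i} h_j ∏_{k=j}^{i} (1 + h_k L)^{−1} ≤ 1/(σL). -/
open Real Finset

theorem stmt1 (r L σ : ℝ) (hr : 0 < r) (hL : 0 < L) (hσ : 0 < σ)
    (hσs : ∀ s ∈ Set.Icc (0:ℝ) (r * L), 1 / (1 + s) ≤ Real.exp (-σ * s))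
    (i : ℕ) (h : ℕ → ℝ) (hh : ∀ j, h j ∈ Set.Ioc (0:ℝ) r) :
    ∑ j ∈ Finset.range (i + 1),
        h j * ∏ k ∈ Finset.Icc j i, (1 + h k * L)⁻¹ ≤ 1 / (σ * L) := by
  have hσL : 0 < σ * L := mul_pos hσ hL
  set S : ℕ → ℝ := fun j => ∑ k ∈ Finset.Icc j i, h k with hS
  have hSnn : ∀ j, 0 ≤ S j := fun j =>
    Finset.sum_nonneg fun k _ => (hh k).1.le
  have key : ∀ j ∈ Finset.range (i + 1),
      h j * ∏ k ∈ Finset.Icc j i, (1 + h k * L)⁻¹ ≤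
        Real.exp (-(σ * L) * S (j + 1)) / (σ * L) -
          Real.exp (-(σ * L) * S j) / (σ * L) := by
    intro j hj
    have hji : j ≤ i := Nat.lt_succ_iff.mp (Finset.mem_range.mp hj)
    have hprod : ∏ k ∈ Finset.Icc j i, (1 + h k * L)⁻¹ ≤ Real.exp (-(σ * L) * S j) := by
      have hbd : ∀ k ∈ Finset.Icc j i, (1 + h k * L)⁻¹ ≤ Real.exp (-σ * (h k * L)) := by
        intro k _
        have h1 : (0:ℝ) ≤ h k * L := mul_nonneg (hh k).1.le hL.le
        have h2 : h k * L ≤ r * L := mul_le_mul_of_nonneg_right (hh k).2 hL.le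
        simpa [one_div] using hσs (h k * L) ⟨h1, h2⟩
      calc ∏ k ∈ Finset.Icc j i, (1 + h k * L)⁻¹
          ≤ ∏ k ∈ Finset.Icc j i, Real.exp (-σ * (h k * L)) := by
            apply Finset.prod_le_prod
            · intro k _
              have h1 : (0:ℝ) < h k * L := mul_pos (hh k).1 hL
              positivity
            · exact hbd
        _ = Real.exp (-(σ * L) * S j) := by
            rw [← Real.exp_sum, hS]
            congr 1
            simp only []
            rw [Finset.mul_sum]
            exact Finset.sum_congr rfl fun k _ => by ring
    have hSsplit : S j = h j + S (j + 1) := by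
      rw [hS]
      simp only []
      rw [Finset.Icc_add_one_left_eq_Ioc, ← Finset.sum_insert (by simp), Finset.Ioc_insert_left hji]
    have hjpos := (hh j).1
    have hexp : (σ * L) * h j * Real.exp (-(σ * L) * S j) ≤
        Real.exp (-(σ * L) * S (j + 1)) - Real.exp (-(σ * L) * S j) := by
      have h1 : (σ * L) * h j + 1 ≤ Real.exp ((σ * L) * h j) :=
        Real.add_one_le_exp _
      have h2 : Real.exp (-(σ * L) * S (j + 1)) =
          Real.exp (-(σ * L) * S j) * Real.exp ((σ * L) * h j) := by
        rw [← Real.exp_add]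
        congr 1
        rw [hSsplit]; ring
      rw [h2]
      nlinarith [Real.exp_pos (-(σ * L) * S j)]
    rw [div_sub_div_same, le_div_iff₀ hσL]
    calc h j * (∏ k ∈ Finset.Icc j i, (1 + h k * L)⁻¹) * (σ * L)
        ≤ h j * Real.exp (-(σ * L) * S j) * (σ * L) := by
          apply mul_le_mul_of_nonneg_right _ hσL.le
          exact mul_le_mul_of_nonneg_left hprod hjpos.le
      _ = (σ * L) * h j * Real.exp (-(σ * L) * S j) := by ring
      _ ≤ _ := hexp
  calc ∑ j ∈ Finset.range (i + 1), h j * ∏ k ∈ Finset.Icc j i, (1 + h k * L)⁻¹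
      ≤ ∑ j ∈ Finset.range (i + 1),
          (Real.exp (-(σ * L) * S (j + 1)) / (σ * L) -
            Real.exp (-(σ * L) * S j) / (σ * L)) := Finset.sum_le_sum key
    _ = Real.exp (-(σ * L) * S (i + 1)) / (σ * L) -
          Real.exp (-(σ * L) * S 0) / (σ * L) :=
        Finset.sum_range_sub (fun j => Real.exp (-(σ * L) * S j) / (σ * L)) (i + 1)
    _ ≤ 1 / (σ * L) := by
        have hS1 : S (i + 1) = 0 := by
          rw [hS]; simp
        rw [hS1]
        simp only [mul_zero, Real.exp_zero]
        have : 0 ≤ Real.exp (-(σ * L) * S 0) / (σ * L) := by positivity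
        linarith
end

section
/- Let f : ℝⁿ → ℝⁿ be locally Lipschitz and V : ℝⁿ → ℝ₊ be a convex, continuously differentiable, positive definite function with ∇V(x)·f(x) < 0 for all x ≠ 0. Suppose Y ∈ ℝⁿ and h ≥ 0 satisfy the implicit Euler equation Y = x + h f(Y). Then V(Y) ≤ V(x). -/
open Real RealInnerProductSpace

/-! The gradient inequality of the convex function `V` at the new point `Y` gives
`V x ≥ V Y + ⟪∇V Y, x - Y⟫ = V Y - h ⟪∇V Y, f Y⟫ ≥ V Y`; at `Y = 0` positive definiteness
suffices. -/

open AffineMap in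
theorem ConvexOn.add_fderiv_sub_le {E : Type*} [NormedAddCommGroup E] [NormedSpace ℝ E]
    {s : Set E} {V : E → ℝ} {L : E →L[ℝ] ℝ} {x y : E}
    (hV : ConvexOn ℝ s V) (hy : y ∈ s) (hx : x ∈ s) (hL : HasFDerivAt V L y) :
    V y + L (x - y) ≤ V x := by
  let ℓ : ℝ →ᵃ[ℝ] E := lineMap y x
  have hline : ConvexOn ℝ (ℓ ⁻¹' s) (V ∘ ℓ) := hV.comp_affineMap ℓ
  have hderiv : HasDerivAt (V ∘ ℓ) (L (x - y)) 0 := by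
    rw [← lineMap_apply_zero y x (k := ℝ)] at hL
    exact hL.comp_hasDerivAt 0 hasDerivAt_lineMap
  have hslope := hline.le_slope_of_hasDerivAt (by simpa [ℓ]) (by simpa [ℓ]) one_pos hderiv
  simp only [ℓ, slope_def_field, Function.comp_apply, lineMap_apply_one, lineMap_apply_zero,
    sub_zero, div_one] at hslope
  linarith

theorem ConvexOn.le_of_eq_add_smul_of_inner_nonpos {E : Type*} [NormedAddCommGroup E]
    [InnerProductSpace ℝ E] [CompleteSpace E] {s : Set E} {V : E → ℝ} {g v x Y : E} {h : ℝ}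
    (hV : ConvexOn ℝ s V) (hY_mem : Y ∈ s) (hx : x ∈ s) (hg : HasGradientAt V g Y)
    (hgv : ⟪g, v⟫ ≤ 0) (hh : 0 ≤ h) (hY : Y = x + h • v) :
    V Y ≤ V x := by
  have hconv := hV.add_fderiv_sub_le hY_mem hx hg.hasFDerivAt
  have hstep : x - Y = -(h • v) := by rw [hY]; abel
  rw [hstep, InnerProductSpace.toDual_apply_apply, inner_neg_right, inner_smul_right] at hconv
  linarith [mul_nonpos_of_nonneg_of_nonpos hh hgv]

theorem stmt6_general (n : ℕ) (f : EuclideanSpace ℝ (Fin n) → EuclideanSpace ℝ (Fin n))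
    (V : EuclideanSpace ℝ (Fin n) → ℝ)
    (hVconv : ConvexOn ℝ Set.univ V) (hVC1 : ContDiff ℝ 1 V)
    (hV0 : V 0 = 0) (hVpos : ∀ x ≠ 0, 0 < V x)
    (hLyap : ∀ x ≠ 0, ⟪gradient V x, f x⟫ < 0)
    (x Y : EuclideanSpace ℝ (Fin n)) (h : ℝ) (hh : 0 ≤ h)
    (hY : Y = x + h • f Y) :
    V Y ≤ V x := by
  rcases eq_or_ne Y 0 with rfl | hY0
  · rw [hV0]
    rcases eq_or_ne x 0 with rfl | hx0
    · rw [hV0]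
    · exact (hVpos x hx0).le
  have hgrad : HasGradientAt V (gradient V Y) Y :=
    ((hVC1.differentiable one_ne_zero) Y).hasGradientAt
  exact hVconv.le_of_eq_add_smul_of_inner_nonpos (Set.mem_univ Y) (Set.mem_univ x) hgrad
    (hLyap Y hY0).le hh hY

theorem stmt6 (n : ℕ) (f : EuclideanSpace ℝ (Fin n) → EuclideanSpace ℝ (Fin n))
    (hf : LocallyLipschitz f)
    (V : EuclideanSpace ℝ (Fin n) → ℝ)
    (hVconv : ConvexOn ℝ Set.univ V) (hVC1 : ContDiff ℝ 1 V)
    (hV0 : V 0 = 0) (hVpos : ∀ x ≠ 0, 0 < V x)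
    (hLyap : ∀ x ≠ 0, ⟪gradient V x, f x⟫ < 0)
    (x Y : EuclideanSpace ℝ (Fin n)) (h : ℝ) (hh : 0 ≤ h)
    (hY : Y = x + h • f Y) :
    V Y ≤ V x :=
  stmt6_general n f V hVconv hVC1 hV0 hVpos hLyap x Y h hh hY
end

section
/- Let f, V be as in Theorem 4.15 (V convex C¹ Lyapunov function for ẋ = f(x), i.e., positive definite, radially unbounded with ∇V(x)·f(x) < 0 for x ≠ 0), fix r > 0, and define W₁(x) := min{−∇V(y)·f(y) : V(x) ≥ V(y) ≥ V(x)/2} and W₂(x) := V(x)/(2r). If Y = x + h f(Y) with h ∈ (0, r], then V(Y) ≤ V(x) − h·min{W₁(x), W₂(x)}. -/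
/-!
Convexity at the implicit Euler point `Y` gives `V Y ≤ V x + h ⟪∇V Y, f Y⟫`. If
`V Y ≥ V x / 2`, then `Y` competes in the minimum defining `W₁ x`, so the decrease is at least
`h W₁ x`. Otherwise `V Y < V x / 2 ≤ V x - h V x / (2r)`, because `h ≤ r`.
-/

open Real RealInnerProductSpace

theorem ConvexOn.hasFDerivAt_apply_sub_le {E : Type*} [NormedAddCommGroup E] [NormedSpace ℝ E]
    {s : Set E} {V : E → ℝ} {V' : E →L[ℝ] ℝ} {x y : E} (hV : ConvexOn ℝ s V)
    (hx : x ∈ s) (hy : y ∈ s) (hV' : HasFDerivAt V V' y) :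
    V' (x - y) ≤ V x - V y := by
  have hline : ConvexOn ℝ (AffineMap.lineMap (k := ℝ) y x ⁻¹' s) (V ∘ AffineMap.lineMap y x) :=
    hV.comp_affineMap _
  have hderiv : HasDerivAt (V ∘ AffineMap.lineMap (k := ℝ) y x) (V' (x - y)) 0 := by
    refine HasFDerivAt.comp_hasDerivAt (0 : ℝ) ?_ AffineMap.hasDerivAt_lineMap
    simpa using hV'
  simpa [slope_def_field] using
    hline.le_slope_of_hasDerivAt (x := 0) (y := 1) (by simpa using hy) (by simpa using hx)
      one_pos hderiv

theorem ConvexOn.inner_gradient_le_sub {E : Type*} [NormedAddCommGroup E]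
    [InnerProductSpace ℝ E] [CompleteSpace E] {s : Set E} {V : E → ℝ} {g x y : E}
    (hV : ConvexOn ℝ s V) (hx : x ∈ s) (hy : y ∈ s) (hg : HasGradientAt V g y) :
    ⟪g, x - y⟫ ≤ V x - V y :=
  hV.hasFDerivAt_apply_sub_le hx hy hg.hasFDerivAt

theorem ConvexOn.le_add_mul_inner_of_eq_add_smul {E : Type*} [NormedAddCommGroup E]
    [InnerProductSpace ℝ E] [CompleteSpace E] {V : E → ℝ} {g x y v : E} {h : ℝ}
    (hV : ConvexOn ℝ Set.univ V) (hg : HasGradientAt V g y) (hy : y = x + h • v) :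
    V y ≤ V x + h * ⟪g, v⟫ := by
  have := hV.inner_gradient_le_sub (Set.mem_univ x) (Set.mem_univ y) hg
  rw [hy, sub_add_cancel_left, inner_neg_right, real_inner_smul_right, ← hy] at this
  linarith

theorem stmt7_general (n : ℕ) (f : EuclideanSpace ℝ (Fin n) → EuclideanSpace ℝ (Fin n))
    (V : EuclideanSpace ℝ (Fin n) → ℝ)
    (hVconv : ConvexOn ℝ Set.univ V) (hVC1 : ContDiff ℝ 1 V)
    (hV0 : V 0 = 0) (hVpos : ∀ x ≠ 0, 0 < V x)
    (hLyap : ∀ x ≠ 0, ⟪gradient V x, f x⟫ < 0)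
    (r : ℝ)
    (W₁ : EuclideanSpace ℝ (Fin n) → ℝ)
    (hW₁ : ∀ x, IsLeast
      {w | ∃ y, V y ≤ V x ∧ V x / 2 ≤ V y ∧ w = -⟪gradient V y, f y⟫} (W₁ x))
    (x Y : EuclideanSpace ℝ (Fin n)) (h : ℝ) (hh : h ∈ Set.Ioc (0:ℝ) r)
    (hY : Y = x + h • f Y) :
    V Y ≤ V x - h * min (W₁ x) (V x / (2 * r)) := by
  obtain ⟨hh0, hhr⟩ := hh
  have hVx : 0 ≤ V x := by
    rcases eq_or_ne x 0 with rfl | hx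
    exacts [hV0.ge, (hVpos x hx).le]
  have hstep : V Y ≤ V x + h * ⟪gradient V Y, f Y⟫ :=
    hVconv.le_add_mul_inner_of_eq_add_smul ((hVC1.differentiable one_ne_zero Y).hasGradientAt) hY
  by_cases hhalf : V x / 2 ≤ V Y
  · have hYx : V Y ≤ V x := by
      rcases eq_or_ne Y 0 with rfl | hY0
      · rwa [hV0]
      · linarith [mul_neg_of_pos_of_neg hh0 (hLyap Y hY0)]
    have hW₁Y : W₁ x ≤ -⟪gradient V Y, f Y⟫ := (hW₁ x).2 ⟨Y, hYx, hhalf, rfl⟩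
    calc V Y ≤ V x + h * ⟪gradient V Y, f Y⟫ := hstep
      _ ≤ V x - h * W₁ x := by nlinarith
      _ ≤ V x - h * min (W₁ x) (V x / (2 * r)) := by gcongr; exact min_le_left _ _
  · have hW₂ : h * (V x / (2 * r)) ≤ V x / 2 := by
      rw [← mul_div_assoc, div_le_div_iff₀ (by linarith) two_pos]
      nlinarith
    calc V Y ≤ V x / 2 := (not_le.mp hhalf).le
      _ ≤ V x - h * (V x / (2 * r)) := by linarith
      _ ≤ V x - h * min (W₁ x) (V x / (2 * r)) := by gcongr; exact min_le_right _ _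

theorem stmt7 (n : ℕ) (f : EuclideanSpace ℝ (Fin n) → EuclideanSpace ℝ (Fin n))
    (hf : LocallyLipschitz f)
    (V : EuclideanSpace ℝ (Fin n) → ℝ)
    (hVconv : ConvexOn ℝ Set.univ V) (hVC1 : ContDiff ℝ 1 V)
    (hV0 : V 0 = 0) (hVpos : ∀ x ≠ 0, 0 < V x)
    (hVrad : ∀ M : ℝ, IsCompact {x | V x ≤ M})
    (hLyap : ∀ x ≠ 0, ⟪gradient V x, f x⟫ < 0)
    (r : ℝ) (hr : 0 < r)
    (W₁ : EuclideanSpace ℝ (Fin n) → ℝ)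
    (hW₁ : ∀ x, IsLeast
      {w | ∃ y, V y ≤ V x ∧ V x / 2 ≤ V y ∧ w = -⟪gradient V y, f y⟫} (W₁ x))
    (x Y : EuclideanSpace ℝ (Fin n)) (h : ℝ) (hh : h ∈ Set.Ioc (0:ℝ) r)
    (hY : Y = x + h • f Y) :
    V Y ≤ V x - h * min (W₁ x) (V x / (2 * r)) :=
  stmt7_general n f V hVconv hVC1 hV0 hVpos hLyap r W₁ hW₁ x Y h hh hY
end

section
/- Let A ∈ ℝ^{n×n} and P ∈ ℝ^{n×n} symmetric positive definite with A'P + PA negative definite. Then for every h > 0 and every x ∈ ℝⁿ, the implicit Euler iterate y = (I − hA)^{−1}x satisfies y'Py ≤ x'Px, with strict inequality when x ≠ 0. -/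
/-!
Write `x = y - h A y`. Expanding the quadratic form gives
`x'Px = y'Py - h y'(A'P + PA)y + h² (Ay)'P(Ay)`: the last term is nonnegative because `P ⪰ 0`,
and for `h > 0` the middle one is nonnegative, and positive when `y ≠ 0`, because `A'P + PA ≺ 0`.
-/

open Matrix

variable {ι R : Type*} [Fintype ι] [DecidableEq ι]

theorem Matrix.dotProduct_mulVec_one_sub_smul_mulVec [CommRing R] (A P : Matrix ι ι R) (h : R)
    (y : ι → R) :
    ((1 - h • A) *ᵥ y) ⬝ᵥ (P *ᵥ ((1 - h • A) *ᵥ y)) =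
      y ⬝ᵥ (P *ᵥ y) - h * (y ⬝ᵥ ((Aᵀ * P + P * A) *ᵥ y))
        + h ^ 2 * ((A *ᵥ y) ⬝ᵥ (P *ᵥ (A *ᵥ y))) := by
  have hAP : (A *ᵥ y) ⬝ᵥ (P *ᵥ y) = y ⬝ᵥ ((Aᵀ * P) *ᵥ y) := by
    rw [dotProduct_mulVec, dotProduct_mulVec, ← vecMul_vecMul, vecMul_transpose]
  simp only [sub_mulVec, one_mulVec, smul_mulVec, mulVec_sub, mulVec_smul, sub_dotProduct,
    dotProduct_sub, smul_dotProduct, dotProduct_smul, add_mulVec, dotProduct_add, smul_eq_mul,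
    ← mulVec_mulVec, hAP]
  ring

theorem Matrix.PosSemidef.dotProduct_mulVec_add_le_of_implicitEuler {A P : Matrix ι ι ℝ}
    (hP : P.PosSemidef) (h : ℝ) (y : ι → ℝ) :
    y ⬝ᵥ (P *ᵥ y) + h * (y ⬝ᵥ (-(Aᵀ * P + P * A) *ᵥ y)) ≤
      ((1 - h • A) *ᵥ y) ⬝ᵥ (P *ᵥ ((1 - h • A) *ᵥ y)) := by
  have hAy : 0 ≤ (A *ᵥ y) ⬝ᵥ (P *ᵥ (A *ᵥ y)) := by
    simpa using hP.dotProduct_mulVec_nonneg (A *ᵥ y)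
  rw [dotProduct_mulVec_one_sub_smul_mulVec, neg_mulVec, dotProduct_neg]
  linarith [mul_nonneg (sq_nonneg h) hAy]

theorem stmt9 (n : ℕ) (A P : Matrix (Fin n) (Fin n) ℝ)
    (hP : P.PosDef) (hneg : (-(Aᵀ * P + P * A)).PosDef) :
    ∀ h : ℝ, 0 < h → ∀ x y : Fin n → ℝ,
      (1 - h • A) *ᵥ y = x →
      y ⬝ᵥ (P *ᵥ y) ≤ x ⬝ᵥ (P *ᵥ x) ∧ (x ≠ 0 → y ⬝ᵥ (P *ᵥ y) < x ⬝ᵥ (P *ᵥ x)) := by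
  intro h hh x y hxy
  subst hxy
  have hdecay := hP.posSemidef.dotProduct_mulVec_add_le_of_implicitEuler (A := A) h y
  refine ⟨?_, fun hx => ?_⟩
  · have hV : 0 ≤ y ⬝ᵥ (-(Aᵀ * P + P * A) *ᵥ y) := by
      simpa using hneg.posSemidef.dotProduct_mulVec_nonneg y
    linarith [mul_nonneg hh.le hV]
  · have hy : y ≠ 0 := by
      rintro rfl
      simp at hx
    have hV : 0 < y ⬝ᵥ (-(Aᵀ * P + P * A) *ᵥ y) := by
      simpa using hneg.dotProduct_mulVec_pos hy
    linarith [mul_pos hh hV]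
end

section
/- Let f : ℝⁿ → ℝⁿ be locally Lipschitz with f(0)=0, let V ∈ C¹(ℝⁿ, ℝ₊) be positive definite and radially unbounded with ∇V(x)·f(x) < 0 for x ≠ 0. Then the function Q(x) := −∇V(x)·f(x) is continuous positive definite, and W(x) := inf{Q(y) + |y−x| : y ∈ ℝⁿ} is globally Lipschitz with Lipschitz constant 1, positive definite, and satisfies W(x) ≤ −∇V(x)·f(x) for all x. -/
/-!
The inf-convolution `W x = inf_y (Q y + ‖y - x‖)` of a nonnegative `Q` is 1-Lipschitz by the
triangle inequality and lies below `Q` (take `y = x`). If `Q` is continuous and positive on a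
closed ball `B(x, r)`, then points `y ∈ B(x, r)` contribute at least `min_B Q > 0` and points
outside contribute more than `r`, so `W x ≥ min (min_B Q) r > 0`; for `x ≠ 0` take
`r = ‖x‖ / 2`, so that `B(x, r)` avoids the only zero of `Q`.
-/

open RealInnerProductSpace Metric Set

/-- The Pasch–Hausdorff envelope of `Q`: its largest 1-Lipschitz minorant when `Q` is bounded
below. -/
noncomputable def lipschitzEnvelope {α : Type*} [PseudoMetricSpace α] (Q : α → ℝ) (x : α) : ℝ :=
  ⨅ y, Q y + dist y x

namespace lipschitzEnvelope

variable {α : Type*} [PseudoMetricSpace α] {Q : α → ℝ}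

theorem bddBelow_range_add_dist (hQ : BddBelow (range Q)) (x : α) :
    BddBelow (range fun y => Q y + dist y x) := by
  obtain ⟨m, hm⟩ := hQ
  refine ⟨m, ?_⟩
  rintro _ ⟨y, rfl⟩
  linarith [hm (mem_range_self y), dist_nonneg (x := y) (y := x)]

theorem le_add_dist (hQ : BddBelow (range Q)) (x y : α) :
    lipschitzEnvelope Q x ≤ Q y + dist y x :=
  ciInf_le (bddBelow_range_add_dist hQ x) y

theorem le_self (hQ : BddBelow (range Q)) (x : α) : lipschitzEnvelope Q x ≤ Q x := by
  simpa using le_add_dist hQ x x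

theorem nonneg (hQ : ∀ y, 0 ≤ Q y) (x : α) : 0 ≤ lipschitzEnvelope Q x :=
  have : Nonempty α := ⟨x⟩
  le_ciInf fun y => add_nonneg (hQ y) dist_nonneg

theorem lipschitzWith_one (hQ : BddBelow (range Q)) : LipschitzWith 1 (lipschitzEnvelope Q) := by
  refine LipschitzWith.of_le_add fun a b => ?_
  have : Nonempty α := ⟨a⟩
  rw [← sub_le_iff_le_add, lipschitzEnvelope]
  refine le_ciInf fun y => sub_le_iff_le_add.mpr ?_
  calc lipschitzEnvelope Q a ≤ Q y + dist y a := le_add_dist hQ a y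
    _ ≤ Q y + dist y b + dist a b := by linarith [dist_triangle_right y a b]

theorem pos_of_pos_on_closedBall [ProperSpace α] (hQ : ∀ y, 0 ≤ Q y) {x : α} {r : ℝ}
    (hr : 0 < r) (hQc : ContinuousOn Q (closedBall x r))
    (hpos : ∀ y ∈ closedBall x r, 0 < Q y) : 0 < lipschitzEnvelope Q x := by
  have : Nonempty α := ⟨x⟩
  obtain ⟨y₀, hy₀, hmin⟩ :=
    (isCompact_closedBall x r).exists_isMinOn ⟨x, mem_closedBall_self hr.le⟩ hQc
  refine (lt_min (hpos y₀ hy₀) hr).trans_le (le_ciInf fun y => ?_)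
  by_cases hy : y ∈ closedBall x r
  · linarith [min_le_left (Q y₀) r, isMinOn_iff.mp hmin y hy, dist_nonneg (x := y) (y := x)]
  · linarith [min_le_right (Q y₀) r, hQ y, (not_le.mp hy : r < dist y x)]

end lipschitzEnvelope

theorem ContDiff.continuous_gradient {E : Type*} [NormedAddCommGroup E] [InnerProductSpace ℝ E]
    [CompleteSpace E] {V : E → ℝ} (hV : ContDiff ℝ 1 V) : Continuous (gradient V) :=
  (InnerProductSpace.toDual ℝ E).symm.continuous.comp (hV.continuous_fderiv one_ne_zero)

theorem stmt10_general (n : ℕ) (f : EuclideanSpace ℝ (Fin n) → EuclideanSpace ℝ (Fin n))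
    (hf : LocallyLipschitz f) (hf0 : f 0 = 0)
    (V : EuclideanSpace ℝ (Fin n) → ℝ) (hVC1 : ContDiff ℝ 1 V)
    (hLyap : ∀ x ≠ 0, ⟪gradient V x, f x⟫ < 0)
    (Q W : EuclideanSpace ℝ (Fin n) → ℝ)
    (hQ : ∀ x, Q x = -⟪gradient V x, f x⟫)
    (hW : ∀ x, W x = ⨅ y : EuclideanSpace ℝ (Fin n), (Q y + ‖y - x‖)) :
    Continuous Q ∧ (Q 0 = 0 ∧ ∀ x ≠ 0, 0 < Q x) ∧
    LipschitzWith 1 W ∧ (W 0 = 0 ∧ ∀ x ≠ 0, 0 < W x) ∧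
    ∀ x, W x ≤ -⟪gradient V x, f x⟫ := by
  have hQc : Continuous Q := by
    rw [funext hQ]; exact (hVC1.continuous_gradient.inner hf.continuous).neg
  have hQ0 : Q 0 = 0 := by simp [hQ, hf0]
  have hQpos : ∀ x ≠ 0, 0 < Q x := fun x hx => by linarith [hQ x, hLyap x hx]
  have hQnonneg : ∀ x, 0 ≤ Q x := fun x => by
    rcases eq_or_ne x 0 with rfl | hx
    exacts [hQ0.ge, (hQpos x hx).le]
  have hQbdd : BddBelow (range Q) := ⟨0, forall_mem_range.mpr hQnonneg⟩
  obtain rfl : W = lipschitzEnvelope Q := funext fun x => by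
    simp only [hW, lipschitzEnvelope, dist_eq_norm]
  have hWpos : ∀ x ≠ 0, 0 < lipschitzEnvelope Q x := fun x hx => by
    have hr : 0 < ‖x‖ / 2 := by positivity
    refine lipschitzEnvelope.pos_of_pos_on_closedBall hQnonneg hr hQc.continuousOn
      fun y hy => hQpos y ?_
    rintro rfl
    rw [mem_closedBall, dist_zero_left] at hy
    linarith
  refine ⟨hQc, ⟨hQ0, hQpos⟩, lipschitzEnvelope.lipschitzWith_one hQbdd,
    ⟨le_antisymm (hQ0 ▸ lipschitzEnvelope.le_self hQbdd 0) (lipschitzEnvelope.nonneg hQnonneg 0),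
      hWpos⟩, fun x => (hQ x) ▸ lipschitzEnvelope.le_self hQbdd x⟩

theorem stmt10 (n : ℕ) (f : EuclideanSpace ℝ (Fin n) → EuclideanSpace ℝ (Fin n))
    (hf : LocallyLipschitz f) (hf0 : f 0 = 0)
    (V : EuclideanSpace ℝ (Fin n) → ℝ) (hVC1 : ContDiff ℝ 1 V)
    (hVnonneg : ∀ x, 0 ≤ V x) (hV0 : V 0 = 0) (hVpos : ∀ x ≠ 0, 0 < V x)
    (hVrad : ∀ M : ℝ, IsCompact {x | V x ≤ M})
    (hLyap : ∀ x ≠ 0, ⟪gradient V x, f x⟫ < 0)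
    (Q W : EuclideanSpace ℝ (Fin n) → ℝ)
    (hQ : ∀ x, Q x = -⟪gradient V x, f x⟫)
    (hW : ∀ x, W x = ⨅ y : EuclideanSpace ℝ (Fin n), (Q y + ‖y - x‖)) :
    Continuous Q ∧ (Q 0 = 0 ∧ ∀ x ≠ 0, 0 < Q x) ∧
    LipschitzWith 1 W ∧ (W 0 = 0 ∧ ∀ x ≠ 0, 0 < W x) ∧
    ∀ x, W x ≤ -⟪gradient V x, f x⟫ :=
  stmt10_general n f hf hf0 V hVC1 hLyap Q W hQ hW
end

section
/- Let f : ℝⁿ → ℝⁿ be locally Lipschitz with f(0)=0, V a C¹ Lyapunov function for ẋ = f(x), W : ℝⁿ → ℝ₊ continuous with W(x) ≤ −∇V(x)·f(x) for all x, b > 0, and suppose exp(−b)|x| ≤ |z(s,x)| ≤ exp(b)|x| for all s ∈ [0, φ(x)], where z(·,x) is the flow. Define W̃(x) := min{W(y) : exp(−b)|x| ≤ |y| ≤ exp(b)|x|}. Then for every x and every h ∈ [0, φ(x)], V(z(h,x)) ≤ V(x) − h W̃(x). -/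
open Real RealInnerProductSpace

/-!
Along the flow, `t ↦ V (z t x) + t * W̃ x` has derivative `∇V · f + W̃ x ≤ -W + W̃ x ≤ 0` on
`[0, φ x]`, because the trajectory stays in the annulus over which `W̃ x` is the minimum of `W`;
the mean value inequality then gives the integrated decrease.
-/

open Set

section

variable {E : Type*} [NormedAddCommGroup E] [InnerProductSpace ℝ E] [CompleteSpace E]

theorem HasGradientAt.comp_hasDerivAt_inner {V : E → ℝ} {g : E} {γ : ℝ → E} {v : E} {s : ℝ}
    (hV : HasGradientAt V g (γ s)) (hγ : HasDerivAt γ v s) :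
    HasDerivAt (fun t => V (γ t)) ⟪g, v⟫ s := by
  have h := hV.hasFDerivAt.comp_hasDerivAt s hγ
  simp only [InnerProductSpace.toDual_apply_apply] at h
  exact h

theorem le_sub_mul_of_le_neg_inner_gradient {V : E → ℝ} (hV : Differentiable ℝ V)
    {F : E → E} {γ : ℝ → E} {c h : ℝ} (hh : 0 ≤ h)
    (hγ : ∀ s ∈ Icc 0 h, HasDerivAt γ (F (γ s)) s)
    (hc : ∀ s ∈ Icc 0 h, c ≤ -⟪gradient V (γ s), F (γ s)⟫) :
    V (γ h) ≤ V (γ 0) - h * c := by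
  have hderiv : ∀ s ∈ Icc 0 h,
      HasDerivAt (fun t => V (γ t)) ⟪gradient V (γ s), F (γ s)⟫ s := fun s hs =>
    (hV (γ s)).hasGradientAt.comp_hasDerivAt_inner (hγ s hs)
  have hmvt := (convex_Icc 0 h).image_sub_le_mul_sub_of_deriv_le
    (fun s hs => (hderiv s hs).continuousAt.continuousWithinAt)
    (fun s hs => (hderiv s (interior_subset hs)).differentiableAt.differentiableWithinAt)
    (C := -c) (fun s hs => by
      rw [(hderiv s (interior_subset hs)).deriv]
      linarith [hc s (interior_subset hs)])
    0 (left_mem_Icc.2 hh) h (right_mem_Icc.2 hh) hh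
  linarith

end

theorem stmt13_general (n : ℕ) (f : EuclideanSpace ℝ (Fin n) → EuclideanSpace ℝ (Fin n))
    (V : EuclideanSpace ℝ (Fin n) → ℝ) (hVC1 : ContDiff ℝ 1 V)
    (W : EuclideanSpace ℝ (Fin n) → ℝ)
    (hWle : ∀ x, W x ≤ -⟪gradient V x, f x⟫)
    (b : ℝ)
    (φ : EuclideanSpace ℝ (Fin n) → ℝ)
    (z : ℝ → EuclideanSpace ℝ (Fin n) → EuclideanSpace ℝ (Fin n))
    (hz0 : ∀ x, z 0 x = x)
    (hzode : ∀ x s, HasDerivAt (fun t => z t x) (f (z s x)) s)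
    (hann : ∀ x, ∀ s ∈ Set.Icc (0:ℝ) (φ x),
      Real.exp (-b) * ‖x‖ ≤ ‖z s x‖ ∧ ‖z s x‖ ≤ Real.exp b * ‖x‖)
    (Wt : EuclideanSpace ℝ (Fin n) → ℝ)
    (hWt : ∀ x, IsLeast
      {w | ∃ y, Real.exp (-b) * ‖x‖ ≤ ‖y‖ ∧ ‖y‖ ≤ Real.exp b * ‖x‖ ∧ w = W y} (Wt x)) :
    ∀ x, ∀ h ∈ Set.Icc (0:ℝ) (φ x), V (z h x) ≤ V x - h * Wt x := by
  intro x h hh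
  have hWt_le : ∀ s ∈ Icc 0 (φ x), Wt x ≤ W (z s x) := fun s hs =>
    (hWt x).2 ⟨z s x, (hann x s hs).1, (hann x s hs).2, rfl⟩
  have key := le_sub_mul_of_le_neg_inner_gradient (hVC1.differentiable one_ne_zero) hh.1
    (fun s _ => hzode x s)
    (fun s hs => (hWt_le s ⟨hs.1, hs.2.trans hh.2⟩).trans (hWle _))
  rwa [hz0] at key

theorem stmt13 (n : ℕ) (f : EuclideanSpace ℝ (Fin n) → EuclideanSpace ℝ (Fin n))
    (hf : LocallyLipschitz f) (hf0 : f 0 = 0)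
    (V : EuclideanSpace ℝ (Fin n) → ℝ) (hVC1 : ContDiff ℝ 1 V)
    (hVnonneg : ∀ x, 0 ≤ V x) (hV0 : V 0 = 0) (hVpos : ∀ x ≠ 0, 0 < V x)
    (hVrad : ∀ M : ℝ, IsCompact {x | V x ≤ M})
    (hLyap : ∀ x ≠ 0, ⟪gradient V x, f x⟫ < 0)
    (W : EuclideanSpace ℝ (Fin n) → ℝ) (hWc : Continuous W)
    (hWnonneg : ∀ x, 0 ≤ W x)
    (hWle : ∀ x, W x ≤ -⟪gradient V x, f x⟫)
    (b : ℝ) (hb : 0 < b)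
    (φ : EuclideanSpace ℝ (Fin n) → ℝ) (hφ : ∀ x, 0 < φ x)
    (z : ℝ → EuclideanSpace ℝ (Fin n) → EuclideanSpace ℝ (Fin n))
    (hz0 : ∀ x, z 0 x = x)
    (hzode : ∀ x s, HasDerivAt (fun t => z t x) (f (z s x)) s)
    (hann : ∀ x, ∀ s ∈ Set.Icc (0:ℝ) (φ x),
      Real.exp (-b) * ‖x‖ ≤ ‖z s x‖ ∧ ‖z s x‖ ≤ Real.exp b * ‖x‖)
    (Wt : EuclideanSpace ℝ (Fin n) → ℝ)
    (hWt : ∀ x, IsLeast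
      {w | ∃ y, Real.exp (-b) * ‖x‖ ≤ ‖y‖ ∧ ‖y‖ ≤ Real.exp b * ‖x‖ ∧ w = W y} (Wt x)) :
    ∀ x, ∀ h ∈ Set.Icc (0:ℝ) (φ x), V (z h x) ≤ V x - h * Wt x :=
  stmt13_general n f V hVC1 W hWle b φ z hz0 hzode hann Wt hWt
end

section
/- Under the hypotheses of Lemma 4.1, if in addition W(x) = 2σV(x) and V(x) ≥ K|x|² for constants σ, K > 0, then the sequence generated by x_{i+1} = x_i + h_i F(h_i, x_i), with h_i ∈ (0, φ(x_i)] and φ continuous with values in (0, r], satisfies |x_i| ≤ exp(−στ_i) √(V(x₀)/K), where τ_i = h_0 + ⋯ + h_{i−1}; i.e., the origin is K-exponentially stable for the discrete iteration. -/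
open Real

theorem stmt15 (n : ℕ) (r : ℝ) (hr : 0 < r)
    (F : ℝ → EuclideanSpace ℝ (Fin n) → EuclideanSpace ℝ (Fin n))
    (φ : EuclideanSpace ℝ (Fin n) → ℝ) (hφc : Continuous φ)
    (hφ : ∀ x, φ x ∈ Set.Ioc (0:ℝ) r)
    (V : EuclideanSpace ℝ (Fin n) → ℝ)
    (hVc : Continuous V) (hV0 : V 0 = 0) (hVpos : ∀ x ≠ 0, 0 < V x)
    (hVrad : ∀ M : ℝ, IsCompact {x | V x ≤ M})
    (σ K : ℝ) (hσ : 0 < σ) (hK : 0 < K)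
    (hVK : ∀ x, K * ‖x‖ ^ 2 ≤ V x)
    (hdec : ∀ x, ∀ h' ∈ Set.Icc (0:ℝ) (φ x),
      V (x + h' • F h' x) ≤ V x - h' * (2 * σ * V x))
    (h : ℕ → ℝ) (x : ℕ → EuclideanSpace ℝ (Fin n))
    (hh : ∀ i, h i ∈ Set.Ioc (0:ℝ) (φ (x i)))
    (hx : ∀ i, x (i + 1) = x i + h i • F (h i) (x i))
    (τ : ℕ → ℝ) (hτ : ∀ i, τ i = ∑ j ∈ Finset.range i, h j) :
    ∀ i, ‖x i‖ ≤ Real.exp (-σ * τ i) * Real.sqrt (V (x 0) / K) := by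
  have hVnn : ∀ y, 0 ≤ V y := fun y =>
    le_trans (by positivity) (hVK y)
  have key : ∀ i, V (x i) ≤ Real.exp (-(2 * σ) * τ i) * V (x 0) := by
    intro i
    induction i with
    | zero => simp [hτ 0]
    | succ i ih =>
      have hhi := hh i
      have hstep := hdec (x i) (h i) ⟨le_of_lt hhi.1, hhi.2⟩
      rw [← hx i] at hstep
      have h1 : V (x (i + 1)) ≤ (1 - h i * (2 * σ)) * V (x i) := by
        nlinarith [hVnn (x i)]
      have h2 : (1 - h i * (2 * σ)) * V (x i) ≤
          Real.exp (-(h i * (2 * σ))) * V (x i) := by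
        have := Real.add_one_le_exp (-(h i * (2 * σ)))
        have hv := hVnn (x i)
        nlinarith
      have hτs : τ (i + 1) = τ i + h i := by
        rw [hτ, hτ, Finset.sum_range_succ]
      calc V (x (i + 1)) ≤ Real.exp (-(h i * (2 * σ))) * V (x i) :=
            le_trans h1 h2
        _ ≤ Real.exp (-(h i * (2 * σ))) * (Real.exp (-(2 * σ) * τ i) * V (x 0)) := by
            have := Real.exp_pos (-(h i * (2 * σ)))
            nlinarith
        _ = Real.exp (-(2 * σ) * τ (i + 1)) * V (x 0) := by
            rw [hτs, ← mul_assoc, ← Real.exp_add]; ring_nf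
  intro i
  have hKi := hVK (x i)
  have hk := key i
  have hnorm2 : ‖x i‖ ^ 2 ≤ Real.exp (-(2 * σ) * τ i) * V (x 0) / K := by
    rw [le_div_iff₀ hK]
    nlinarith
  have : ‖x i‖ ≤ Real.sqrt (Real.exp (-(2 * σ) * τ i) * V (x 0) / K) := by
    have := Real.sqrt_le_sqrt hnorm2
    rwa [Real.sqrt_sq (norm_nonneg _)] at this
  refine this.trans_eq ?_
  rw [mul_div_assoc, Real.sqrt_mul (Real.exp_pos _).le]
  congr 1
  rw [show -(2 * σ) * τ i = -σ * τ i + -σ * τ i by ring, Real.exp_add,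
    Real.sqrt_mul_self (Real.exp_pos _).le]
end

section
/- Let F : [0,r] × ℝⁿ → ℝⁿ, let z(·, x₀) denote the exact flow of ẋ = f(x), and suppose there exists L > 0 with |F(h,z) − F(h,x)| ≤ L|z − x| for all relevant z, x, h. Define the numerical iterates x_{i+1} = x_i + h_i F(h_i, x_i) and errors e_i := z(τ_i, x₀) − x_i, and local residuals d̃_i := (z(τ_{i+1}, x₀) − z(τ_i, x₀))/h_i − F(h_i, z(τ_i, x₀)). Then |e_{i+1}| ≤ exp(Lτ_{i+1}) ∑_{j=0}^{i} exp(−Lτ_{j+1}) h_j |d̃_j| ≤ (D_i/L)(exp(Lτ_{i+1}) − 1), where D_i := max_{j≤i} |d̃_j| and τ_{i+1} = ∑_{j≤i} h_j. -/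
open Real Finset

theorem stmt18 (n : ℕ) (r L : ℝ) (hr : 0 < r) (hL : 0 < L)
    (F : ℝ → EuclideanSpace ℝ (Fin n) → EuclideanSpace ℝ (Fin n))
    (hFlip : ∀ h a b, ‖F h a - F h b‖ ≤ L * ‖a - b‖)
    (z : ℝ → EuclideanSpace ℝ (Fin n))
    (h : ℕ → ℝ) (hh : ∀ i, h i ∈ Set.Ioc (0:ℝ) r)
    (τ : ℕ → ℝ) (hτ : ∀ i, τ i = ∑ j ∈ Finset.range i, h j)
    (x : ℕ → EuclideanSpace ℝ (Fin n)) (hx0 : x 0 = z 0)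
    (hx : ∀ i, x (i + 1) = x i + h i • F (h i) (x i))
    (e : ℕ → EuclideanSpace ℝ (Fin n)) (he : ∀ i, e i = z (τ i) - x i)
    (d : ℕ → EuclideanSpace ℝ (Fin n))
    (hd : ∀ i, d i = (h i)⁻¹ • (z (τ (i + 1)) - z (τ i)) - F (h i) (z (τ i))) :
    ∀ i,
      ‖e (i + 1)‖ ≤ Real.exp (L * τ (i + 1)) *
          ∑ j ∈ Finset.range (i + 1), Real.exp (-L * τ (j + 1)) * (h j * ‖d j‖) ∧
      Real.exp (L * τ (i + 1)) *
          ∑ j ∈ Finset.range (i + 1), Real.exp (-L * τ (j + 1)) * (h j * ‖d j‖) ≤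
        ((Finset.range (i + 1)).sup' (by simp) (fun j => ‖d j‖) / L) *
          (Real.exp (L * τ (i + 1)) - 1) := by
  have hτ0 : τ 0 = 0 := by simp [hτ]
  have hτs : ∀ k, τ (k + 1) = τ k + h k := by
    intro k; simp [hτ, Finset.sum_range_succ]
  have hpos : ∀ k, 0 < h k := fun k => (hh k).1
  set S : ℕ → ℝ := fun k => ∑ j ∈ Finset.range k, Real.exp (-L * τ (j + 1)) * (h j * ‖d j‖)
    with hS
  have hSnn : ∀ k, 0 ≤ S k := by
    intro k
    refine Finset.sum_nonneg fun j _ => ?_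
    exact mul_nonneg (Real.exp_pos _).le (mul_nonneg (hpos j).le (norm_nonneg _))
  have key : ∀ k, ‖e k‖ ≤ Real.exp (L * τ k) * S k := by
    intro k
    induction k with
    | zero => simp [he, hτ0, hx0, hS]
    | succ k ih =>
      have hne : h k ≠ 0 := (hpos k).ne'
      have hz : z (τ (k + 1)) = z (τ k) + h k • d k + h k • F (h k) (z (τ k)) := by
        have h2 : h k • d k = (z (τ (k + 1)) - z (τ k)) - h k • F (h k) (z (τ k)) := by
          rw [hd k, smul_sub, smul_inv_smul₀ hne]
        rw [h2]; abel
      have he1 : e (k + 1) = e k + h k • (F (h k) (z (τ k)) - F (h k) (x k)) + h k • d k := by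
        rw [he, he, hz, hx, smul_sub]; abel
      have hstep : ‖e (k + 1)‖ ≤ Real.exp (L * h k) * ‖e k‖ + h k * ‖d k‖ := by
        have h3 : ‖e (k + 1)‖ ≤ ‖e k‖ + h k * (L * ‖e k‖) + h k * ‖d k‖ := by
          rw [he1]
          refine le_trans (norm_add_le _ _) ?_
          gcongr
          · refine le_trans (norm_add_le _ _) ?_
            gcongr
            rw [norm_smul, Real.norm_of_nonneg (hpos k).le]
            have := hFlip (h k) (z (τ k)) (x k)
            rw [← he k] at this
            exact mul_le_mul_of_nonneg_left this (hpos k).le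
          · rw [norm_smul, Real.norm_of_nonneg (hpos k).le]
        nlinarith [norm_nonneg (e k), hpos k, Real.add_one_le_exp (L * h k)]
      have hSucc : Real.exp (L * τ (k + 1)) * S (k + 1)
          = Real.exp (L * h k) * (Real.exp (L * τ k) * S k) + h k * ‖d k‖ := by
        have e1 : Real.exp (L * τ (k + 1)) = Real.exp (L * τ k) * Real.exp (L * h k) := by
          rw [hτs, ← Real.exp_add]; ring_nf
        have e2 : Real.exp (L * τ (k + 1)) * Real.exp (-L * τ (k + 1)) = 1 := by
          rw [← Real.exp_add]; ring_nf; exact Real.exp_zero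
        have e3 : S (k + 1) = S k + Real.exp (-L * τ (k + 1)) * (h k * ‖d k‖) := by
          simp [hS, Finset.sum_range_succ]
        rw [e3]
        linear_combination S k * e1 + (h k * ‖d k‖) * e2
      calc ‖e (k + 1)‖ ≤ Real.exp (L * h k) * ‖e k‖ + h k * ‖d k‖ := hstep
        _ ≤ Real.exp (L * h k) * (Real.exp (L * τ k) * S k) + h k * ‖d k‖ := by
            have := mul_le_mul_of_nonneg_left ih (Real.exp_pos (L * h k)).le
            linarith
        _ = Real.exp (L * τ (k + 1)) * S (k + 1) := hSucc.symm
  intro i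
  refine ⟨key (i + 1), ?_⟩
  set D : ℝ := (Finset.range (i + 1)).sup' (by simp) (fun j => ‖d j‖) with hD
  have hDge : ∀ j ∈ Finset.range (i + 1), ‖d j‖ ≤ D := fun j hj => Finset.le_sup' (fun j => ‖d j‖) hj
  have hDnn : 0 ≤ D := le_trans (norm_nonneg (d 0)) (hDge 0 (by simp))
  have hterm : ∀ j ∈ Finset.range (i + 1),
      Real.exp (-L * τ (j + 1)) * (h j * ‖d j‖)
        ≤ (D / L) * (Real.exp (-L * τ j) - Real.exp (-L * τ (j + 1))) := by
    intro j hj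
    have hsplit : Real.exp (-L * τ (j + 1)) = Real.exp (-L * τ j) * Real.exp (-(L * h j)) := by
      rw [hτs, ← Real.exp_add]; ring_nf
    have ha : L * h j + 1 ≤ Real.exp (L * h j) := by
      have := Real.add_one_le_exp (L * h j); linarith
    have hee : Real.exp (L * h j) * Real.exp (-(L * h j)) = 1 := by
      rw [← Real.exp_add]; simp
    have h5 : (L * h j) * Real.exp (-(L * h j)) ≤ 1 - Real.exp (-(L * h j)) := by
      nlinarith [Real.exp_pos (-(L * h j))]
    have h6 : Real.exp (-L * τ (j + 1)) * h j ≤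
        (Real.exp (-L * τ j) - Real.exp (-L * τ (j + 1))) / L := by
      rw [le_div_iff₀ hL, hsplit]
      nlinarith [Real.exp_pos (-L * τ j)]
    have h7 : Real.exp (-L * τ (j + 1)) * (h j * ‖d j‖)
        ≤ (Real.exp (-L * τ j) - Real.exp (-L * τ (j + 1))) / L * ‖d j‖ := by
      have := mul_le_mul_of_nonneg_right h6 (norm_nonneg (d j))
      calc Real.exp (-L * τ (j + 1)) * (h j * ‖d j‖)
          = Real.exp (-L * τ (j + 1)) * h j * ‖d j‖ := by ring
        _ ≤ _ := this
    refine h7.trans ?_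
    have h8 : 0 ≤ (Real.exp (-L * τ j) - Real.exp (-L * τ (j + 1))) / L := by
      have : Real.exp (-L * τ (j + 1)) * h j ≤ _ := h6
      nlinarith [mul_pos (Real.exp_pos (-L * τ (j + 1))) (hpos j)]
    calc (Real.exp (-L * τ j) - Real.exp (-L * τ (j + 1))) / L * ‖d j‖
        ≤ (Real.exp (-L * τ j) - Real.exp (-L * τ (j + 1))) / L * D :=
          mul_le_mul_of_nonneg_left (hDge j hj) h8
      _ = (D / L) * (Real.exp (-L * τ j) - Real.exp (-L * τ (j + 1))) := by ring
  have hsum : S (i + 1) ≤ (D / L) * (1 - Real.exp (-L * τ (i + 1))) := by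
    calc S (i + 1) ≤ ∑ j ∈ Finset.range (i + 1),
          (D / L) * (Real.exp (-L * τ j) - Real.exp (-L * τ (j + 1))) :=
        Finset.sum_le_sum hterm
      _ = (D / L) * ∑ j ∈ Finset.range (i + 1),
          (Real.exp (-L * τ j) - Real.exp (-L * τ (j + 1))) := by
        rw [Finset.mul_sum]
      _ = (D / L) * (Real.exp (-L * τ 0) - Real.exp (-L * τ (i + 1))) := by
        rw [Finset.sum_range_sub' (fun j => Real.exp (-L * τ j))]
      _ = (D / L) * (1 - Real.exp (-L * τ (i + 1))) := by
        rw [hτ0]; simp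
  have hee : Real.exp (L * τ (i + 1)) * Real.exp (-L * τ (i + 1)) = 1 := by
    rw [← Real.exp_add]; ring_nf; exact Real.exp_zero
  have := mul_le_mul_of_nonneg_left hsum (Real.exp_pos (L * τ (i + 1))).le
  calc Real.exp (L * τ (i + 1)) * S (i + 1)
      ≤ Real.exp (L * τ (i + 1)) * ((D / L) * (1 - Real.exp (-L * τ (i + 1)))) := this
    _ = (D / L) * (Real.exp (L * τ (i + 1)) - 1) := by
        linear_combination (-(D / L)) * hee
end
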